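/- Density theorem for conditional measures: let (X,𝓑,m) be a standard Borel probability space (a Lebesgue space), η a measurable partition of X with Rohlin conditional measures {m_x^η}, and π : X → ℝ^d a Borel measurable map. Then for every A ∈ 𝓑 and for m-a.e. x ∈ X, lim_{r→0} m_x^η(B^π(x,r) ∩ A)/m_x^η(B^π(x,r)) = E_m(1_A | η̂ ∨ π^{-1}𝓑(ℝ^d))(x), where η̂ is the σ-algebra of η-saturated measurable sets and η̂ ∨ π^{-1}𝓑(ℝ^d) is the σ-algebra generated by η̂ together with π^{-1}𝓑(ℝ^d). -/

import Mathlib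

/-!
The conditional measures are `η̂`-measurable, hence constant along each fiber of `η`; call the
common value `ν`. For `y` on that fiber the ratio is the ratio of the masses that `π_*(ν|A)` and
`π_*ν` give to the ball `B(π y, r)`, so by the Besicovitch differentiation theorem it converges
`ν`-a.e. to the Radon–Nikodym derivative `D_ν (π y)` of `π_*(ν|A)` with respect to `π_*ν`.

The measure of a closed ball is right-continuous in the radius, so convergence can be tested along
rational radii. Hence the set of convergence points is measurable, and the limit `f` is measurable
for `η̂ ∨ π⁻¹𝓑`. Statements that hold a.e. on every fiber then integrate to `m`-a.e. statements.

On each fiber `∫_{π⁻¹T} f dν = ν(π⁻¹T ∩ A)`. Integrating over the fibers gives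
`∫_{p⁻¹S ∩ π⁻¹T} f dm = m(p⁻¹S ∩ π⁻¹T ∩ A)`. These rectangles generate `η̂ ∨ π⁻¹𝓑`, so `f` is
the conditional expectation of `1_A`.
-/

open MeasureTheory Filter Set Metric Function Topology ProbabilityTheory
open scoped ENNReal

theorem tendsto_nhdsGT_of_tendsto_ratCast {Y : Type*} [TopologicalSpace Y] [RegularSpace Y]
    {g : ℝ → Y} {a : ℝ} {L : Y} (hg : ∀ᶠ r in 𝓝[>] a, ContinuousWithinAt g (Ioi r) r)
    (h : Tendsto (fun q : ℚ => g q) (comap (↑) (𝓝[>] a)) (𝓝 L)) :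
    Tendsto g (𝓝[>] a) (𝓝 L) := by
  rw [(closed_nhds_basis L).tendsto_right_iff]
  rintro U ⟨hU, hUc⟩
  obtain ⟨V, hV, hVU⟩ := mem_comap.1 (h hU)
  obtain ⟨b, hab, hb⟩ := mem_nhdsGT_iff_exists_Ioo_subset.1 hV
  filter_upwards [hg, Ioo_mem_nhdsGT hab] with r hr hrb
  have hsub : g '' (Ioo r b ∩ range ((↑) : ℚ → ℝ)) ⊆ U := by
    rintro _ ⟨_, ⟨hx, q, rfl⟩, rfl⟩
    exact hVU (hb ⟨hrb.1.trans hx.1, hx.2⟩)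
  have hr_mem : r ∈ closure (Ioo r b ∩ range ((↑) : ℚ → ℝ)) := by
    refine closure_minimal (Rat.denseRange_cast.open_subset_closure_inter isOpen_Ioo)
      isClosed_closure ?_
    rw [closure_Ioo hrb.2.ne]
    exact left_mem_Icc.2 hrb.2.le
  exact hUc.closure_subset_iff.2 hsub
    ((hr.mono (inter_subset_left.trans Ioo_subset_Ioi_self)).mem_closure_image hr_mem)

instance neBot_comap_ratCast_nhdsGT (a : ℝ) : (comap ((↑) : ℚ → ℝ) (𝓝[>] a)).NeBot :=
  comap_neBot fun _ ht =>
    let ⟨_, hab, hb⟩ := mem_nhdsGT_iff_exists_Ioo_subset.1 ht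
    let ⟨q, hq⟩ := exists_rat_btwn hab
    ⟨q, hb hq⟩

section BallRatio

variable {E : Type*} [PseudoMetricSpace E] [MeasurableSpace E]

noncomputable def ballRatio (ρ σ : Measure E) (c : E) (r : ℝ) : ℝ :=
  ρ.real (closedBall c r) / σ.real (closedBall c r)

theorem ballRatio_nonneg (ρ σ : Measure E) (c : E) (r : ℝ) : 0 ≤ ballRatio ρ σ c r :=
  div_nonneg measureReal_nonneg measureReal_nonneg

variable [OpensMeasurableSpace E]

theorem continuousWithinAt_measureReal_closedBall (μ : Measure E) [IsFiniteMeasure μ] (c : E)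
    (r : ℝ) : ContinuousWithinAt (fun r => μ.real (closedBall c r)) (Ioi r) r := by
  have h := tendsto_measure_biInter_gt (μ := μ) (s := closedBall c) (a := r)
    (fun _ _ => measurableSet_closedBall.nullMeasurableSet)
    (fun _ _ _ h => closedBall_subset_closedBall h) ⟨r + 1, by linarith, measure_ne_top _ _⟩
  rw [biInter_gt_closedBall] at h
  exact (ENNReal.tendsto_toReal (measure_ne_top _ _)).comp h

theorem eventually_continuousWithinAt_ballRatio (ρ σ : Measure E) [IsFiniteMeasure ρ]
    [IsFiniteMeasure σ] (c : E) :
    ∀ᶠ r in 𝓝[>] 0, ContinuousWithinAt (ballRatio ρ σ c) (Ioi r) r := by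
  by_cases hnull : ∃ r₀ > 0, σ (closedBall c r₀) = 0
  · -- then the ratio is `ρ.real _ / 0 = 0` on all of `(0, r₀)`
    obtain ⟨r₀, hr₀, h0⟩ := hnull
    have hzero : ∀ r < r₀, ballRatio ρ σ c r = 0 := fun r hr => by
      simp [ballRatio, Measure.real, measure_mono_null (closedBall_subset_closedBall hr.le) h0]
    filter_upwards [Ioo_mem_nhdsGT hr₀] with r hr
    refine continuousWithinAt_const.congr_of_eventuallyEq ?_ (hzero r hr.2)
    exact mem_of_superset (mem_nhdsWithin_of_mem_nhds (Iio_mem_nhds hr.2)) hzero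
  · push Not at hnull
    filter_upwards [self_mem_nhdsWithin] with r hr
    exact (continuousWithinAt_measureReal_closedBall ρ c r).div
      (continuousWithinAt_measureReal_closedBall σ c r)
      (ENNReal.toReal_ne_zero.2 ⟨hnull r hr, measure_ne_top _ _⟩)

end BallRatio

theorem Besicovitch.ae_tendsto_ballRatio {E : Type*} [MetricSpace E] [MeasurableSpace E]
    [BorelSpace E] [SecondCountableTopology E] [HasBesicovitchCovering E]
    (ρ σ : Measure E) [IsFiniteMeasure ρ] [IsFiniteMeasure σ] :
    ∀ᵐ z ∂σ, Tendsto (ballRatio ρ σ z) (𝓝[>] 0) (𝓝 (ρ.rnDeriv σ z).toReal) := by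
  filter_upwards [Besicovitch.ae_tendsto_rnDeriv ρ σ, Measure.rnDeriv_lt_top ρ σ]
    with z hz hlt
  exact ((ENNReal.tendsto_toReal hlt.ne).comp hz).congr fun r => ENNReal.toReal_div _ _

section Pushforward

variable {X E : Type*} [MeasurableSpace X] [MeasurableSpace E] {π : X → E} {A : Set X}

theorem ballRatio_map_restrict [PseudoMetricSpace E] [OpensMeasurableSpace E] (ν : Measure X)
    (hπ : Measurable π) (hA : MeasurableSet A) (c : E) (r : ℝ) :
    ballRatio ((ν.restrict A).map π) (ν.map π) c r
      = (ν (π ⁻¹' closedBall c r ∩ A)).toReal / (ν (π ⁻¹' closedBall c r)).toReal := by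
  simp only [ballRatio, Measure.real, Measure.map_apply hπ measurableSet_closedBall,
    Measure.restrict_apply' hA]

theorem measurable_ballRatio_map_restrict [PseudoMetricSpace E] [OpensMeasurableSpace E]
    [SecondCountableTopology E] {W : Type*} {mW : MeasurableSpace W} {κ : W → Measure X}
    (hκ : Measurable κ) [∀ w, IsProbabilityMeasure (κ w)] (hπ : Measurable π) {e : W → E}
    (he : Measurable e) (hA : MeasurableSet A) (r : ℝ) :
    Measurable fun w => ballRatio (((κ w).restrict A).map π) ((κ w).map π) (e w) r := by
  let K : Kernel W X := ⟨κ, hκ⟩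
  have : IsMarkovKernel K := ⟨fun w => inferInstanceAs (IsProbabilityMeasure (κ w))⟩
  have hball : ∀ B, MeasurableSet B →
      Measurable fun w => κ w (π ⁻¹' closedBall (e w) r ∩ B) := fun B hB =>
    Kernel.measurable_kernel_prodMk_left (κ := K)
      ((measurableSet_le ((hπ.comp measurable_snd).dist (he.comp measurable_fst))
        measurable_const).inter (measurable_snd hB))
  simp only [ballRatio_map_restrict _ hπ hA]
  exact (hball A hA).ennreal_toReal.div (by simpa using (hball univ .univ).ennreal_toReal)

theorem withDensity_preimage_eq_restrict (ν : Measure X) [IsFiniteMeasure ν]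
    (hπ : Measurable π) {F : X → ℝ≥0∞}
    (hF : F =ᵐ[ν] fun y => ((ν.restrict A).map π).rnDeriv (ν.map π) (π y))
    {T : Set E} (hT : MeasurableSet T) :
    ν.withDensity F (π ⁻¹' T) = ν.restrict A (π ⁻¹' T) := by
  have hac : (ν.restrict A).map π ≪ ν.map π :=
    Measure.absolutelyContinuous_of_le (Measure.map_mono Measure.restrict_le_self hπ)
  rw [withDensity_congr_ae hF, withDensity_apply _ (hπ hT),
    ← setLIntegral_map hT (Measure.measurable_rnDeriv _ _) hπ,
    Measure.setLIntegral_rnDeriv hac, Measure.map_apply hπ hT]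

end Pushforward

theorem measure_preimage_inter_eq_indicator {X Z : Type*} [MeasurableSpace X] {μ : Measure X}
    {p : X → Z} {z : Z} (h : ∀ᵐ y ∂μ, p y = z) (S : Set Z) (t : Set X) :
    μ (p ⁻¹' S ∩ t) = S.indicator (fun _ => μ t) z := by
  by_cases hz : z ∈ S
  · rw [indicator_of_mem hz]
    refine measure_congr (h.mono fun y hy => ?_)
    change (y ∈ p ⁻¹' S ∩ t) = (y ∈ t)
    simp [hy, hz]
  · rw [indicator_of_notMem hz, ← measure_empty (μ := μ)]
    refine measure_congr (h.mono fun y hy => ?_)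
    change (y ∈ p ⁻¹' S ∩ t) = (y ∈ (∅ : Set X))
    simp [hy, hz]

theorem measure_eq_of_forall_preimage_inter_preimage {X Z E : Type*} [MeasurableSpace X]
    [MeasurableSpace Z] [MeasurableSpace E] {p : X → Z} {π : X → E} (hp : Measurable p)
    (hπ : Measurable π) {α β : Measure X} [IsFiniteMeasure α]
    (h : ∀ S T, MeasurableSet S → MeasurableSet T →
      α (p ⁻¹' S ∩ π ⁻¹' T) = β (p ⁻¹' S ∩ π ⁻¹' T))
    {s : Set X} (hs : MeasurableSet[MeasurableSpace.comap p inferInstance ⊔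
      MeasurableSpace.comap π inferInstance] s) :
    α s = β s := by
  rw [← MeasurableSpace.comap_prodMk] at hs
  obtain ⟨U, hU, rfl⟩ := hs
  have hφ : Measurable fun x => (p x, π x) := hp.prodMk hπ
  have hmap : α.map (fun x => (p x, π x)) = β.map (fun x => (p x, π x)) :=
    Measure.ext_prod fun hS hT => by
      simpa only [Measure.map_apply hφ (hS.prod hT), mk_preimage_prod] using h _ _ hS hT
  rw [← Measure.map_apply hφ hU, hmap, Measure.map_apply hφ hU]

theorem toReal_ae_eq_condExp_indicator {X : Type*} {J m0 : MeasurableSpace X} (hJ : J ≤ m0)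
    (μ : Measure X) [IsFiniteMeasure μ] {F : X → ℝ≥0∞} (hF : Measurable[J] F) {A : Set X}
    (hA : MeasurableSet A) (h : ∀ s, MeasurableSet[J] s → ∫⁻ x in s, F x ∂μ = μ (s ∩ A)) :
    (fun x => (F x).toReal) =ᵐ[μ] μ[A.indicator fun _ => (1 : ℝ) | J] := by
  have hFm : Measurable F := hF.mono hJ le_rfl
  have hF_ne_top : ∫⁻ x, F x ∂μ ≠ ∞ := by
    rw [← setLIntegral_univ, h _ MeasurableSet.univ]
    exact measure_ne_top _ _
  refine ae_eq_condExp_of_forall_setIntegral_eq hJ ((integrable_const 1).indicator hA)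
    (fun s _ _ => (integrable_toReal_of_lintegral_ne_top hFm.aemeasurable hF_ne_top).integrableOn)
    (fun s hs _ => ?_) hF.ennreal_toReal.aestronglyMeasurable
  rw [integral_toReal hFm.aemeasurable.restrict (ae_restrict_of_ae (ae_lt_top hFm hF_ne_top)),
    h s hs, integral_indicator_const _ hA, smul_eq_mul, mul_one, measureReal_restrict_apply hA,
    inter_comm, Measure.real]

section ConditionalMeasures

variable {X Z : Type*} [MeasurableSpace X] [MeasurableSpace Z] {p : X → Z}
  {μc : X → Measure X} {m : Measure X}

theorem factorsThrough_of_measurable_comap_apply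
    (hmeas : ∀ A : Set X, MeasurableSet A →
      Measurable[MeasurableSpace.comap p inferInstance] (fun x => μc x A)) :
    μc.FactorsThrough p :=
  fun _ _ h => Measure.ext fun A hA => (hmeas A hA).factorsThrough h

theorem ae_eq_of_measure_fiber_eq_one [MeasurableSingletonClass Z] (hp : Measurable p)
    [∀ x, IsProbabilityMeasure (μc x)] (hatom : ∀ x, μc x {y | p y = p x} = 1) (x : X) :
    ∀ᵐ y ∂μc x, p y = p x :=
  (prob_compl_eq_zero_iff (hp (measurableSet_singleton (p x)))).2 (hatom x)

theorem lintegral_eq_lintegral_lintegral_of_disintegration (hμc : Measurable μc)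
    (hdisint : ∀ A : Set X, MeasurableSet A → m A = ∫⁻ x, μc x A ∂m) {g : X → ℝ≥0∞}
    (hg : Measurable g) : ∫⁻ y, g y ∂m = ∫⁻ x, ∫⁻ y, g y ∂μc x ∂m := by
  have hbind : m.bind μc = m :=
    Measure.ext fun s hs => by rw [Measure.bind_apply hs hμc.aemeasurable, hdisint s hs]
  conv_lhs => rw [← hbind]
  exact Measure.lintegral_bind hμc.aemeasurable hg.aemeasurable

theorem ae_of_forall_ae_of_disintegration
    (hdisint : ∀ A : Set X, MeasurableSet A → m A = ∫⁻ x, μc x A ∂m) {P : X → Prop}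
    (hP : MeasurableSet {y | P y}) (h : ∀ x, ∀ᵐ y ∂μc x, P y) : ∀ᵐ y ∂m, P y := by
  rw [ae_iff]
  exact (hdisint _ hP.compl).trans ((lintegral_congr fun x => ae_iff.1 (h x)).trans lintegral_zero)

theorem ae_tendsto_limUnder_ratCast_of_disintegration
    (hdisint : ∀ A : Set X, MeasurableSet A → m A = ∫⁻ x, μc x A ∂m) {g : X → ℝ → ℝ}
    (hg : ∀ r, Measurable fun x => g x r)
    (hcont : ∀ x, ∀ᶠ r in 𝓝[>] 0, ContinuousWithinAt (g x) (Ioi r) r)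
    (h : ∀ x, ∀ᵐ y ∂μc x, ∃ c, Tendsto (g y) (𝓝[>] 0) (𝓝 c)) :
    ∀ᵐ y ∂m, Tendsto (g y) (𝓝[>] 0)
      (𝓝 (limUnder (comap ((↑) : ℚ → ℝ) (𝓝[>] 0)) fun q : ℚ => g y q)) := by
  have hconv : MeasurableSet
      {y | ∃ c, Tendsto (fun q : ℚ => g y q) (comap ((↑) : ℚ → ℝ) (𝓝[>] 0)) (𝓝 c)} :=
    StronglyMeasurable.measurableSet_exists_tendsto fun q => (hg q).stronglyMeasurable
  filter_upwards [ae_of_forall_ae_of_disintegration hdisint hconv fun x =>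
    (h x).mono fun y ⟨c, hc⟩ => ⟨c, hc.comp tendsto_comap⟩] with y hy
  exact tendsto_nhdsGT_of_tendsto_ratCast (hcont y) (tendsto_nhds_limUnder hy)

theorem ae_tendsto_ballRatio_rnDeriv_of_measurable_comap {E : Type*} [MetricSpace E]
    [MeasurableSpace E] [BorelSpace E] [SecondCountableTopology E] [HasBesicovitchCovering E]
    {π : X → E} (hπ : Measurable π) (A : Set X) [∀ x, IsFiniteMeasure (μc x)]
    (hmeas : ∀ A : Set X, MeasurableSet A →
      Measurable[MeasurableSpace.comap p inferInstance] (fun x => μc x A))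
    (hfib : ∀ x, ∀ᵐ y ∂μc x, p y = p x) (x : X) :
    ∀ᵐ y ∂μc x,
      Tendsto (ballRatio (((μc y).restrict A).map π) ((μc y).map π) (π y)) (𝓝[>] 0)
        (𝓝 ((((μc x).restrict A).map π).rnDeriv ((μc x).map π) (π y)).toReal)
      ∧ (((μc x).restrict A).map π).rnDeriv ((μc x).map π) (π y) ≠ ∞ := by
  set ρ := ((μc x).restrict A).map π
  set σ := (μc x).map π
  filter_upwards [ae_of_ae_map hπ.aemeasurable
    ((Besicovitch.ae_tendsto_ballRatio ρ σ).and (Measure.rnDeriv_lt_top ρ σ)), hfib x]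
    with y hy hpy
  rw [factorsThrough_of_measurable_comap_apply hmeas hpy]
  exact ⟨hy.1, hy.2.ne⟩

theorem setLIntegral_eq_measure_inter_of_disintegration {E : Type*} [MeasurableSpace E]
    {π : X → E} (hp : Measurable p) (hπ : Measurable π) (hμc : Measurable μc)
    [IsFiniteMeasure m] [∀ x, IsFiniteMeasure (μc x)]
    (hdisint : ∀ A : Set X, MeasurableSet A → m A = ∫⁻ x, μc x A ∂m)
    (hfib : ∀ x, ∀ᵐ y ∂μc x, p y = p x) {A : Set X} (hA : MeasurableSet A)
    {F : X → ℝ≥0∞} (hF : Measurable F)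
    (hFD : ∀ x, F =ᵐ[μc x] fun y => (((μc x).restrict A).map π).rnDeriv ((μc x).map π) (π y))
    {s : Set X} (hs : MeasurableSet[MeasurableSpace.comap p inferInstance ⊔
      MeasurableSpace.comap π inferInstance] s) :
    ∫⁻ y in s, F y ∂m = m (s ∩ A) := by
  have hsm : MeasurableSet s := sup_le hp.comap_le hπ.comap_le s hs
  rw [← withDensity_apply _ hsm, ← Measure.restrict_apply hsm]
  refine (measure_eq_of_forall_preimage_inter_preimage hp hπ (fun S T hS hT => ?_) hs).symm
  have ht := (hp hS).inter (hπ hT)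
  rw [Measure.restrict_apply ht, hdisint _ (ht.inter hA), withDensity_apply _ ht,
    ← lintegral_indicator ht,
    lintegral_eq_lintegral_lintegral_of_disintegration hμc hdisint (hF.indicator ht)]
  refine lintegral_congr fun x => ?_
  rw [lintegral_indicator ht, ← withDensity_apply _ ht, ← Measure.restrict_apply ht,
    measure_preimage_inter_eq_indicator ((withDensity_absolutelyContinuous _ F).ae_le (hfib x)),
    measure_preimage_inter_eq_indicator (ae_restrict_of_ae (hfib x)),
    withDensity_preimage_eq_restrict _ hπ (hFD x) hT]

end ConditionalMeasures

theorem density_conditional_measures_general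
    {X Z : Type*} [MeasurableSpace X]
    [MeasurableSpace Z] [StandardBorelSpace Z]
    (m : Measure X) [IsProbabilityMeasure m]
    {d : ℕ} (π : X → EuclideanSpace ℝ (Fin d)) (hπ : Measurable π)
    -- the measurable partition `η = {p⁻¹(z)}`
    (p : X → Z) (hp : Measurable p)
    -- Rohlin's system of conditional measures of `m` given `η`
    (μc : X → Measure X)
    (hprob : ∀ x, IsProbabilityMeasure (μc x))
    (hatom : ∀ x, μc x {y | p y = p x} = 1)
    (hmeas : ∀ A : Set X, MeasurableSet A →
      Measurable[MeasurableSpace.comap p inferInstance] (fun x => μc x A))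
    (hdisint : ∀ A : Set X, MeasurableSet A → m A = ∫⁻ x, μc x A ∂m)
    (A : Set X) (hA : MeasurableSet A) :
    ∀ᵐ x ∂m,
      Tendsto (fun r : ℝ =>
          (μc x (π ⁻¹' closedBall (π x) r ∩ A)).toReal
            / (μc x (π ⁻¹' closedBall (π x) r)).toReal)
        (𝓝[>] (0 : ℝ))
        (𝓝 ((m[Set.indicator A (fun _ => (1 : ℝ)) |
            MeasurableSpace.comap p inferInstance ⊔ MeasurableSpace.comap π inferInstance]) x)) := by
  have hJ : MeasurableSpace.comap p inferInstance ⊔ MeasurableSpace.comap π inferInstance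
      ≤ ‹MeasurableSpace X› := sup_le hp.comap_le hπ.comap_le
  have hμc : Measurable[MeasurableSpace.comap p inferInstance ⊔
      MeasurableSpace.comap π inferInstance] μc :=
    (Measure.measurable_of_measurable_coe (mβ := MeasurableSpace.comap p inferInstance) μc
      hmeas).mono le_sup_left le_rfl
  have hfib := ae_eq_of_measure_fiber_eq_one hp hatom
  set g : X → ℝ → ℝ := fun x => ballRatio (((μc x).restrict A).map π) ((μc x).map π) (π x)
  set f : X → ℝ := fun x => limUnder (comap ((↑) : ℚ → ℝ) (𝓝[>] 0)) fun q : ℚ => g x q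
  have hg : ∀ r, Measurable[MeasurableSpace.comap p inferInstance ⊔
      MeasurableSpace.comap π inferInstance] fun x => g x r :=
    measurable_ballRatio_map_restrict hμc hπ (Measurable.of_comap_le le_sup_right) hA
  have hf : Measurable[MeasurableSpace.comap p inferInstance ⊔
      MeasurableSpace.comap π inferInstance] f :=
    -- `StronglyMeasurable.limUnder` reads the σ-algebra on `X` from the instance
    letI := MeasurableSpace.comap p inferInstance ⊔ MeasurableSpace.comap π inferInstance
    (StronglyMeasurable.limUnder fun q : ℚ => (hg q).stronglyMeasurable).measurable
  have hD := ae_tendsto_ballRatio_rnDeriv_of_measurable_comap hπ A hmeas hfib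
  have hfD : ∀ x, ∀ᵐ y ∂μc x, ENNReal.ofReal (f y)
      = (((μc x).restrict A).map π).rnDeriv ((μc x).map π) (π y) := fun x =>
    (hD x).mono fun y hy =>
      (congrArg ENNReal.ofReal (hy.1.comp tendsto_comap).limUnder_eq).trans
        (ENNReal.ofReal_toReal hy.2)
  have hlim : ∀ᵐ y ∂m, Tendsto (g y) (𝓝[>] 0) (𝓝 (f y)) :=
    ae_tendsto_limUnder_ratCast_of_disintegration hdisint (fun r => (hg r).mono hJ le_rfl)
      (fun x => eventually_continuousWithinAt_ballRatio _ _ _)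
      fun x => (hD x).mono fun y hy => ⟨_, hy.1⟩
  have hcond := toReal_ae_eq_condExp_indicator hJ m hf.ennreal_ofReal hA fun s hs =>
    setLIntegral_eq_measure_inter_of_disintegration hp hπ (hμc.mono hJ le_rfl) hdisint hfib hA
      (hf.mono hJ le_rfl).ennreal_ofReal hfD hs
  filter_upwards [hlim, hcond] with x hx hcx
  rw [← hcx, ENNReal.toReal_ofReal (ge_of_tendsto' hx fun r => ballRatio_nonneg _ _ _ r)]
  exact hx.congr (ballRatio_map_restrict _ hπ hA _)

/-- Density theorem for conditional measures: if `{μc x}` is Rohlin's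
system of conditional measures of `m` given the measurable partition `η` into the fibers
of a measurable map `p : X → Z`, and `π : X → ℝ^d` is Borel, then for every measurable
`A` and `m`-a.e. `x`,
`lim_{r→0} μc x(B^π(x,r) ∩ A)/μc x(B^π(x,r)) = E_m(1_A | η̂ ∨ π⁻¹𝓑(ℝ^d))(x)`. -/
theorem density_conditional_measures
    {X Z : Type*} [MeasurableSpace X] [StandardBorelSpace X]
    [MeasurableSpace Z] [StandardBorelSpace Z]
    (m : Measure X) [IsProbabilityMeasure m]
    {d : ℕ} (π : X → EuclideanSpace ℝ (Fin d)) (hπ : Measurable π)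
    -- the measurable partition `η = {p⁻¹(z)}`
    (p : X → Z) (hp : Measurable p)
    -- Rohlin's system of conditional measures of `m` given `η`
    (μc : X → Measure X)
    (hprob : ∀ x, IsProbabilityMeasure (μc x))
    (hatom : ∀ x, μc x {y | p y = p x} = 1)
    (hmeas : ∀ A : Set X, MeasurableSet A →
      Measurable[MeasurableSpace.comap p inferInstance] (fun x => μc x A))
    (hdisint : ∀ A : Set X, MeasurableSet A → m A = ∫⁻ x, μc x A ∂m)
    (A : Set X) (hA : MeasurableSet A) :
    ∀ᵐ x ∂m,
      Tendsto (fun r : ℝ =>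
          (μc x (π ⁻¹' closedBall (π x) r ∩ A)).toReal
            / (μc x (π ⁻¹' closedBall (π x) r)).toReal)
        (𝓝[>] (0 : ℝ))
        (𝓝 ((m[Set.indicator A (fun _ => (1 : ℝ)) |
            MeasurableSpace.comap p inferInstance ⊔ MeasurableSpace.comap π inferInstance]) x)) :=
  density_conditional_measures_general m π hπ p hp μc hprob hatom hmeas hdisint A hA
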